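/- In the setting of Proposition 1, if additionally P(x_m|Y=1) = P(x_m|Y=0) for all m outside a subset I of size M̃ (the informative instances), then logit(P(Y=1|X)) = Σ_{m∈I} logit(P(Y=1|x_m)) - (M̃-1)·log(P(Y=1)/P(Y=0)). -/

import Mathlib

/-!
Posterior odds are prior odds times the likelihood ratio, so in log-odds Bayes' rule is additive:
`logit Q = ∑ₘ log (aₘ / bₘ) + logit p` and `logit qₘ = log (aₘ / bₘ) + logit p`.
An uninformative instance has likelihood ratio `1` and drops out of the sum; eliminating the
remaining log-likelihood ratios through the `qₘ` leaves `|I| - 1` surplus copies of the prior logit.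
-/

noncomputable def logit (p : ℝ) : ℝ := Real.log (p / (1 - p))

open Finset

lemma posterior_odds {x y p : ℝ} (hD : x * p + y * (1 - p) ≠ 0) :
    let q := x * p / (x * p + y * (1 - p))
    q / (1 - q) = x / y * (p / (1 - p)) := by
  intro q
  have hq : 1 - q = y * (1 - p) / (x * p + y * (1 - p)) := by
    simp only [q]
    field_simp
    ring
  rw [hq, div_div_div_cancel_right₀ hD, mul_div_mul_comm]

lemma logit_posterior {x y p : ℝ} (hx : 0 < x) (hy : 0 < y) (hp0 : 0 < p) (hp1 : p < 1) :
    logit (x * p / (x * p + y * (1 - p))) = Real.log (x / y) + logit p := by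
  have h1p : 0 < 1 - p := sub_pos.mpr hp1
  have hD : 0 < x * p + y * (1 - p) := by positivity
  rw [logit, posterior_odds hD.ne', Real.log_mul (by positivity) (by positivity), logit]

lemma Real.log_prod_div_prod {ι : Type*} (s : Finset ι) {a b : ι → ℝ}
    (ha : ∀ i ∈ s, a i ≠ 0) (hb : ∀ i ∈ s, b i ≠ 0) :
    Real.log ((∏ i ∈ s, a i) / ∏ i ∈ s, b i) = ∑ i ∈ s, Real.log (a i / b i) := by
  rw [← prod_div_distrib, Real.log_prod]
  exact fun i hi => div_ne_zero (ha i hi) (hb i hi)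

lemma sum_log_div_eq_sum_of_eq_off {ι : Type*} [Fintype ι] (I : Finset ι) {a b : ι → ℝ}
    (ha : ∀ i, a i ≠ 0) (huninf : ∀ i ∉ I, a i = b i) :
    ∑ i, Real.log (a i / b i) = ∑ i ∈ I, Real.log (a i / b i) := by
  refine (sum_subset (subset_univ I) fun i _ hi => ?_).symm
  rw [← huninf i hi, div_self (ha i), Real.log_one]

/-- Proposition 1 with uninformative instances: if `a m = b m` for all `m ∉ I`, then
only the `M̃ = |I|` informative instances contribute. -/
theorem bag_logit_eq_sum_informative_logits {M : ℕ} (a b : Fin M → ℝ) (p : ℝ)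
    (q : Fin M → ℝ) (Q : ℝ) (I : Finset (Fin M))
    (ha : ∀ m, 0 < a m) (hb : ∀ m, 0 < b m) (hp0 : 0 < p) (hp1 : p < 1)
    (hq : ∀ m, q m = a m * p / (a m * p + b m * (1 - p)))
    (hQ : Q = (∏ m, a m) * p / ((∏ m, a m) * p + (∏ m, b m) * (1 - p)))
    (huninf : ∀ m ∉ I, a m = b m) :
    logit Q = (∑ m ∈ I, logit (q m)) - ((I.card : ℝ) - 1) * Real.log (p / (1 - p)) := by
  have hlogit_q : ∀ m, logit (q m) = Real.log (a m / b m) + logit p := fun m => by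
    rw [hq m, logit_posterior (ha m) (hb m) hp0 hp1]
  calc logit Q = Real.log ((∏ m, a m) / ∏ m, b m) + logit p := by
        rw [hQ, logit_posterior (prod_pos fun m _ => ha m) (prod_pos fun m _ => hb m) hp0 hp1]
    _ = ∑ m ∈ I, Real.log (a m / b m) + logit p := by
        rw [Real.log_prod_div_prod _ (fun m _ => (ha m).ne') (fun m _ => (hb m).ne'),
          sum_log_div_eq_sum_of_eq_off I (fun m => (ha m).ne') huninf]
    _ = (∑ m ∈ I, logit (q m)) - ((I.card : ℝ) - 1) * logit p := by
        simp only [hlogit_q, sum_add_distrib, sum_const, nsmul_eq_mul]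
        ring
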